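/- Let (Y_j(n))_{j=1}^{n-1} be independent Exponential random variables with rates λ_j(n) = 2α_j(n) > 0, and define μ_1(n) = 1/(1 + ∑_{i=1}^{n-1} exp(−∑_{j=1}^i Y_j(n))). Suppose there is a sequence c_n → 0 with c_n ≤ 1/8 and α_j(n) ≤ 2 j c_n for all j and large n. Then E[1/μ_1(n)] → 1 as n → ∞, and consequently μ_1(n) → 1 in probability. -/

import Mathlib

/-!
Write `1 / μ₁(n) = 1 + Sₙ` with `Sₙ = ∑ᵢ exp (-(Y₁ + ⋯ + Yᵢ))`. By independence and the
Laplace transform of the exponential law, `E[exp (-(Y₁ + ⋯ + Yᵢ))] = ∏ⱼ rⱼ / (rⱼ + 1)` with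
`rⱼ = 2 αⱼ(n)`. The hypothesis `rⱼ ≤ 4 j cₙ ≤ j / 2` bounds the first factor by `4 cₙ` and the
`j`-th by `j / (j + 2)`, so the `i`-th product is at most `24 cₙ / ((i + 1) (i + 2))` and
`E[Sₙ] ≤ 12 cₙ → 0`. Finally `|μ₁(n) - 1| ≤ Sₙ`, and Markov's inequality turns `E[Sₙ] → 0` into
convergence in probability.
-/

open MeasureTheory ProbabilityTheory Finset Filter
open scoped Topology

namespace ProbabilityTheory

lemma mgf_id_expMeasure {r t : ℝ} (hr : 0 < r) (ht : t < r) :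
    mgf id (expMeasure r) t = r / (r - t) := by
  have hdensity : ∀ x, (exponentialPDFReal r x).toNNReal • Real.exp (t * x)
      = (Set.Ici 0).indicator (fun x => r * Real.exp ((t - r) * x)) x := by
    intro x
    rw [NNReal.smul_def, smul_eq_mul, exponentialPDFReal, gammaPDFReal]
    by_cases hx : 0 ≤ x
    · rw [if_pos hx, Set.indicator_of_mem (Set.mem_Ici.2 hx),
        Real.coe_toNNReal _ (by positivity), mul_assoc, ← Real.exp_add]
      simp only [Real.rpow_one, Real.Gamma_one, div_one, sub_self, Real.rpow_zero, mul_one]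
      ring_nf
    · rw [if_neg hx, Set.indicator_of_notMem (by simpa using hx)]
      simp
  have hexp : expMeasure r = volume.withDensity fun x => (exponentialPDFReal r x).toNNReal := rfl
  rw [mgf, hexp, integral_withDensity_eq_integral_smul
    (measurable_exponentialPDFReal r).real_toNNReal]
  simp only [id, hdensity]
  rw [integral_indicator measurableSet_Ici, integral_Ici_eq_integral_Ioi, integral_const_mul,
    integral_exp_mul_Ioi (by linarith), mul_zero, Real.exp_zero, neg_div, ← div_neg, neg_sub,
    mul_one_div]

section ExpNegSum

variable {ι Ω : Type*} [MeasurableSpace Ω] {P : Measure Ω} {Y : ι → Ω → ℝ} {r : ι → ℝ}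
  {s : Finset ι}

lemma iIndepFun.mgf_sum_of_map_eq_expMeasure {t : ℝ} (hindep : iIndepFun Y P)
    (hmeas : ∀ j, Measurable (Y j)) (hr : ∀ j ∈ s, 0 < r j) (ht : ∀ j ∈ s, t < r j)
    (hlaw : ∀ j ∈ s, P.map (Y j) = expMeasure (r j)) :
    mgf (∑ j ∈ s, Y j) P t = ∏ j ∈ s, r j / (r j - t) := by
  rw [hindep.mgf_sum hmeas]
  refine prod_congr rfl fun j hj => ?_
  rw [← mgf_id_map (hmeas j).aemeasurable, hlaw j hj, mgf_id_expMeasure (hr j hj) (ht j hj)]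

lemma iIndepFun.integral_exp_neg_sum_of_map_eq_expMeasure (hindep : iIndepFun Y P)
    (hmeas : ∀ j, Measurable (Y j)) (hr : ∀ j ∈ s, 0 < r j)
    (hlaw : ∀ j ∈ s, P.map (Y j) = expMeasure (r j)) :
    ∫ ω, Real.exp (-∑ j ∈ s, Y j ω) ∂P = ∏ j ∈ s, r j / (r j + 1) := by
  simpa [mgf, Finset.sum_apply, sub_neg_eq_add] using
    hindep.mgf_sum_of_map_eq_expMeasure (t := -1) hmeas hr
      (fun j hj => by linarith [hr j hj]) hlaw

lemma iIndepFun.integrable_exp_neg_sum_of_map_eq_expMeasure (hindep : iIndepFun Y P)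
    (hmeas : ∀ j, Measurable (Y j)) (hr : ∀ j ∈ s, 0 < r j)
    (hlaw : ∀ j ∈ s, P.map (Y j) = expMeasure (r j)) :
    Integrable (fun ω => Real.exp (-∑ j ∈ s, Y j ω)) P :=
  .of_integral_ne_zero <| by
    rw [hindep.integral_exp_neg_sum_of_map_eq_expMeasure hmeas hr hlaw]
    exact (prod_pos fun j hj => div_pos (hr j hj) (by linarith [hr j hj])).ne'

end ExpNegSum

section PartialSums

variable {Ω : Type*} [MeasurableSpace Ω] {P : Measure Ω} {Y : ℕ → Ω → ℝ} {r : ℕ → ℝ} {m : ℕ}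

lemma iIndepFun.integrable_sum_exp_neg_partialSum (hindep : iIndepFun Y P)
    (hmeas : ∀ j, Measurable (Y j)) (hr : ∀ j ∈ Icc 1 m, 0 < r j)
    (hlaw : ∀ j ∈ Icc 1 m, P.map (Y j) = expMeasure (r j)) :
    Integrable (fun ω => ∑ i ∈ Icc 1 m, Real.exp (-∑ j ∈ Icc 1 i, Y j ω)) P := by
  refine integrable_finsetSum _ fun i hi => ?_
  have hsub : Icc 1 i ⊆ Icc 1 m := Icc_subset_Icc_right (mem_Icc.1 hi).2
  exact hindep.integrable_exp_neg_sum_of_map_eq_expMeasure hmeas (fun j hj => hr j (hsub hj))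
    fun j hj => hlaw j (hsub hj)

lemma iIndepFun.integral_sum_exp_neg_partialSum (hindep : iIndepFun Y P)
    (hmeas : ∀ j, Measurable (Y j)) (hr : ∀ j ∈ Icc 1 m, 0 < r j)
    (hlaw : ∀ j ∈ Icc 1 m, P.map (Y j) = expMeasure (r j)) :
    ∫ ω, ∑ i ∈ Icc 1 m, Real.exp (-∑ j ∈ Icc 1 i, Y j ω) ∂P
      = ∑ i ∈ Icc 1 m, ∏ j ∈ Icc 1 i, r j / (r j + 1) := by
  have hsub : ∀ i ∈ Icc 1 m, Icc 1 i ⊆ Icc 1 m := fun i hi =>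
    Icc_subset_Icc_right (mem_Icc.1 hi).2
  rw [integral_finsetSum]
  · refine sum_congr rfl fun i hi => ?_
    exact hindep.integral_exp_neg_sum_of_map_eq_expMeasure hmeas
      (fun j hj => hr j (hsub i hi hj)) fun j hj => hlaw j (hsub i hi hj)
  · intro i hi
    exact hindep.integrable_exp_neg_sum_of_map_eq_expMeasure hmeas
      (fun j hj => hr j (hsub i hi hj)) fun j hj => hlaw j (hsub i hi hj)

end PartialSums

end ProbabilityTheory

lemma prod_div_add_one_le {r : ℕ → ℝ} {c : ℝ} (hc : c ≤ 1 / 8) {i : ℕ} (hi : 1 ≤ i)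
    (hr₀ : ∀ j ∈ Icc 1 i, 0 ≤ r j) (hr : ∀ j ∈ Icc 1 i, r j ≤ 4 * j * c) :
    ∏ j ∈ Icc 1 i, r j / (r j + 1) ≤ 24 * c / ((i + 1) * (i + 2)) := by
  have hc₀ : 0 ≤ c := by
    have h₀ := hr₀ 1 (by simp [hi])
    have h := hr 1 (by simp [hi])
    push_cast at h
    linarith
  induction i, hi using Nat.le_induction with
  | base =>
    have h₀ := hr₀ 1 (by simp)
    have h := hr 1 (by simp)
    rw [Icc_self, prod_singleton, div_le_div_iff₀ (by linarith) (by norm_num)]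
    push_cast at h ⊢
    nlinarith
  | succ i hi ih =>
    have hsub : Icc 1 i ⊆ Icc 1 (i + 1) := Icc_subset_Icc_right (by omega)
    have hmem : i + 1 ∈ Icc 1 (i + 1) := by simp
    have h₀ := hr₀ (i + 1) hmem
    have h := hr (i + 1) hmem
    push_cast at h
    -- `x ↦ x / (x + 1)` is increasing and `r (i + 1) ≤ (i + 1) / 2`
    have hfactor : r (i + 1) / (r (i + 1) + 1) ≤ (i + 1) / (i + 3) := by
      rw [div_le_div_iff₀ (by linarith) (by positivity)]
      nlinarith
    calc ∏ j ∈ Icc 1 (i + 1), r j / (r j + 1)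
        = (∏ j ∈ Icc 1 i, r j / (r j + 1)) * (r (i + 1) / (r (i + 1) + 1)) :=
          prod_Icc_succ_top (by omega) _
      _ ≤ 24 * c / ((i + 1) * (i + 2)) * ((i + 1) / (i + 3)) := by
          refine mul_le_mul (ih (fun j hj => hr₀ j (hsub hj)) (fun j hj => hr j (hsub hj)))
            hfactor (by positivity) (by positivity)
      _ = 24 * c / ((((i + 1 : ℕ) : ℝ) + 1) * (((i + 1 : ℕ) : ℝ) + 2)) := by
          push_cast
          field_simp
          ring

lemma sum_Icc_one_div_mul_eq (m : ℕ) :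
    ∑ i ∈ Icc 1 m, (1 : ℝ) / ((i + 1) * (i + 2)) = 1 / 2 - 1 / (m + 2) := by
  induction m with
  | zero => simp
  | succ k ih =>
    rw [sum_Icc_succ_top (by omega), ih]
    push_cast
    field_simp
    ring

lemma sum_prod_div_add_one_le {r : ℕ → ℝ} {c : ℝ} (hc : c ≤ 1 / 8) {m : ℕ} (hm : 1 ≤ m)
    (hr₀ : ∀ j ∈ Icc 1 m, 0 ≤ r j) (hr : ∀ j ∈ Icc 1 m, r j ≤ 4 * j * c) :
    ∑ i ∈ Icc 1 m, ∏ j ∈ Icc 1 i, r j / (r j + 1) ≤ 12 * c := by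
  have hc₀ : 0 ≤ c := by
    have h₀ := hr₀ 1 (by simp [hm])
    have h := hr 1 (by simp [hm])
    push_cast at h
    linarith
  have hsub : ∀ i ∈ Icc 1 m, Icc 1 i ⊆ Icc 1 m := fun i hi =>
    Icc_subset_Icc_right (mem_Icc.1 hi).2
  calc ∑ i ∈ Icc 1 m, ∏ j ∈ Icc 1 i, r j / (r j + 1)
      ≤ ∑ i ∈ Icc 1 m, 24 * c * (1 / ((i + 1) * (i + 2))) := by
        refine sum_le_sum fun i hi => ?_
        rw [mul_one_div]
        exact prod_div_add_one_le hc (mem_Icc.1 hi).1 (fun j hj => hr₀ j (hsub i hi hj))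
          (fun j hj => hr j (hsub i hi hj))
    _ = 24 * c * (1 / 2 - 1 / (m + 2)) := by rw [← mul_sum, sum_Icc_one_div_mul_eq]
    _ ≤ 12 * c := by
        have : (0 : ℝ) ≤ 1 / (m + 2) := by positivity
        nlinarith

lemma tendstoInMeasure_of_dist_le {ι α E : Type*} [MeasurableSpace α] [PseudoMetricSpace E]
    {μ : Measure α} [IsFiniteMeasure μ] {l : Filter ι} {f : ι → α → E} {g : α → E}
    {S : ι → α → ℝ} (hS₀ : ∀ i, 0 ≤ᵐ[μ] S i) (hS_int : ∀ i, Integrable (S i) μ)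
    (hS : Tendsto (fun i => ∫ x, S i x ∂μ) l (𝓝 0))
    (hdist : ∀ i x, dist (f i x) (g x) ≤ S i x) :
    TendstoInMeasure μ f l g := by
  rw [tendstoInMeasure_iff_dist]
  intro ε hε
  have hmarkov :
      ∀ i, μ {x | ε ≤ dist (f i x) (g x)} ≤ ENNReal.ofReal ((∫ x, S i x ∂μ) / ε) := by
    intro i
    calc μ {x | ε ≤ dist (f i x) (g x)}
        ≤ μ {x | ε ≤ S i x} := measure_mono fun x hx => le_trans hx (hdist i x)
      _ = ENNReal.ofReal (μ.real {x | ε ≤ S i x}) := (ofReal_measureReal).symm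
      _ ≤ ENNReal.ofReal ((∫ x, S i x ∂μ) / ε) := by
          gcongr
          rw [le_div_iff₀' hε]
          exact mul_meas_ge_le_integral_of_nonneg (hS₀ i) (hS_int i) ε
  have hbound : Tendsto (fun i => ENNReal.ofReal ((∫ x, S i x ∂μ) / ε)) l (𝓝 0) := by
    simpa using ENNReal.tendsto_ofReal (hS.div_const ε)
  exact tendsto_of_tendsto_of_tendsto_of_le_of_le tendsto_const_nhds hbound (fun _ => zero_le)
    hmarkov

lemma dist_inv_one_add_one_le {s : ℝ} (hs : 0 ≤ s) : dist (1 + s)⁻¹ 1 ≤ s := by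
  have hinv : (1 + s)⁻¹ ≤ 1 := inv_le_one_of_one_le₀ (by linarith)
  have hsub : 1 - (1 + s)⁻¹ = s / (1 + s) := by field_simp; ring
  rw [Real.dist_eq, abs_sub_comm, abs_of_nonneg (sub_nonneg.2 hinv), hsub]
  exact div_le_self hs (by linarith)

/-- If `(Y_j(n))_{j=1}^{n-1}` are independent Exponentials with rates `2 α_j(n) > 0`,
`μ₁(n) = (1 + ∑_{i=1}^{n-1} exp(−∑_{j=1}^i Y_j(n)))⁻¹`, and there is a sequence `c_n → 0`
with (for large `n`) `c_n ≤ 1/8` and `α_j(n) ≤ 2 j c_n` for all `j`, then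
`E[1/μ₁(n)] → 1` and hence `μ₁(n) → 1` in probability. -/
theorem mu_one_tendsto_one
    {Ω : Type*} [MeasurableSpace Ω] (P : Measure Ω) [IsProbabilityMeasure P]
    (α : ℕ → ℕ → ℝ) (hα : ∀ n, ∀ j, 1 ≤ j → j ≤ n - 1 → 0 < α n j)
    (Y : ℕ → ℕ → Ω → ℝ) (hmeas : ∀ n j, Measurable (Y n j))
    (hindep : ∀ n, iIndepFun (Y n) P)
    (hdist : ∀ n, ∀ j, 1 ≤ j → j ≤ n - 1 →
      Measure.map (Y n j) P = expMeasure (2 * α n j))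
    (c : ℕ → ℝ) (hc0 : Tendsto c atTop (nhds 0))
    (hc : ∀ᶠ n in atTop, c n ≤ 1 / 8 ∧ ∀ j, 1 ≤ j → j ≤ n - 1 → α n j ≤ 2 * j * c n)
    (μ₁ : ℕ → Ω → ℝ)
    (hμ : μ₁ = fun n ω =>
      (1 + ∑ i ∈ Finset.Icc 1 (n - 1),
        Real.exp (-(∑ j ∈ Finset.Icc 1 i, Y n j ω)))⁻¹) :
    Tendsto (fun n => ∫ ω, (μ₁ n ω)⁻¹ ∂P) atTop (nhds 1) ∧
      TendstoInMeasure P μ₁ atTop (fun _ => 1) := by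
  set S : ℕ → Ω → ℝ := fun n ω =>
    ∑ i ∈ Icc 1 (n - 1), Real.exp (-∑ j ∈ Icc 1 i, Y n j ω)
  subst hμ
  have hS₀ : ∀ n ω, 0 ≤ S n ω := fun n ω => sum_nonneg fun i _ => (Real.exp_pos _).le
  have hrate : ∀ n, ∀ j ∈ Icc 1 (n - 1), 0 < 2 * α n j := fun n j hj => by
    linarith [hα n j (mem_Icc.1 hj).1 (mem_Icc.1 hj).2]
  have hlaw : ∀ n, ∀ j ∈ Icc 1 (n - 1), P.map (Y n j) = expMeasure (2 * α n j) :=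
    fun n j hj => hdist n j (mem_Icc.1 hj).1 (mem_Icc.1 hj).2
  have hS_int : ∀ n, Integrable (S n) P := fun n =>
    (hindep n).integrable_sum_exp_neg_partialSum (hmeas n) (hrate n) (hlaw n)
  have hES_le : ∀ᶠ n in atTop, ∫ ω, S n ω ∂P ≤ 12 * c n := by
    filter_upwards [hc, eventually_ge_atTop 2] with n ⟨hc₈, hαc⟩ hn
    rw [(hindep n).integral_sum_exp_neg_partialSum (hmeas n) (hrate n) (hlaw n)]
    refine sum_prod_div_add_one_le hc₈ (by omega) (fun j hj => (hrate n j hj).le)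
      fun j hj => ?_
    linarith [hαc j (mem_Icc.1 hj).1 (mem_Icc.1 hj).2]
  have hES_lim : Tendsto (fun n => ∫ ω, S n ω ∂P) atTop (𝓝 0) :=
    squeeze_zero' (.of_forall fun n => integral_nonneg (hS₀ n)) hES_le
      (by simpa using hc0.const_mul 12)
  refine ⟨?_, tendstoInMeasure_of_dist_le (fun n => ae_of_all _ (hS₀ n)) hS_int hES_lim
    fun n ω => dist_inv_one_add_one_le (hS₀ n ω)⟩
  have hE_inv : ∀ n, ∫ ω, ((1 + S n ω)⁻¹)⁻¹ ∂P = 1 + ∫ ω, S n ω ∂P := fun n => by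
    simp_rw [inv_inv]
    rw [integral_add (integrable_const 1) (hS_int n), integral_const, probReal_univ, one_smul]
  simpa only [add_zero] using (hES_lim.const_add 1).congr fun n => (hE_inv n).symm
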